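/- Let D be a finite abelian group and I ⊆ D a subgroup such that D/I is cyclic; fix a generator φ of D/I. Define the ℤ[D]-module W = {(x, y) ∈ ΔD ⊕ ℤ[D/I] : x̄ = (1 − φ^{-1})·y}, where x̄ denotes the image of x in ℤ[D/I], and define the ℤ[D]-linear map f : W → ℤ[D] by f(x, y) = x + ν_I·ỹ, where ỹ ∈ ℤ[D] is any lift of y (the product ν_I·ỹ does not depend on the choice of lift). Then f is injective, and its cokernel is isomorphic as a ℤ[D]-module to ℤ[D/I]/(g), where g = 1 − φ^{-1} + #I ∈ ℤ[D/I]. -/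

import Mathlib

open MonoidAlgebra

/-- The projection `ℤ[D] → ℤ[D/I]`. -/
noncomputable def toQuot {D : Type} [CommGroup D] (I : Subgroup D) :
    MonoidAlgebra ℤ D →+* MonoidAlgebra ℤ (D ⧸ I) :=
  MonoidAlgebra.mapDomainRingHom ℤ (QuotientGroup.mk' I)

/-- The sum `ν_H = Σ_{σ ∈ H} σ` of the elements of a subgroup `H` in the group algebra. -/
noncomputable def nuElt (R : Type) [CommRing R] {G : Type} [CommGroup G] [Fintype G]
    (H : Subgroup G) : MonoidAlgebra R G :=
  letI := Classical.decPred (· ∈ H)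
  ∑ σ ∈ Finset.univ.filter (· ∈ H), MonoidAlgebra.of R G σ

/-- The augmentation map `ℤ[D] → ℤ`. -/
noncomputable def augMap (D : Type) [CommGroup D] : MonoidAlgebra ℤ D →ₐ[ℤ] ℤ :=
  MonoidAlgebra.lift ℤ ℤ D 1

/-- The `ℤ[D]`-module `W = {(x, y) ∈ ΔD ⊕ ℤ[D/I] : x̄ = (1 − φ⁻¹)·y}`, as a subset of
`ℤ[D] × ℤ[D/I]`. -/
def Wmod {D : Type} [CommGroup D] (I : Subgroup D) (φq : D ⧸ I) :
    Set (MonoidAlgebra ℤ D × MonoidAlgebra ℤ (D ⧸ I)) :=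
  {p | p.1 ∈ RingHom.ker (augMap D) ∧
    toQuot I p.1 = (1 - MonoidAlgebra.of ℤ (D ⧸ I) φq⁻¹) * p.2}

/-- The map `f : W → ℤ[D]`, `f(x, y) = x + ν_I·ỹ`, where `ỹ = Finsupp.mapDomain
Quotient.out y` is the coefficientwise lift of `y` along the section `Quotient.out` of
`D → D/I` (the product `ν_I·ỹ` does not depend on the choice of lift). -/
noncomputable def liftSec {D : Type} [CommGroup D] (I : Subgroup D) :
    MonoidAlgebra ℤ (D ⧸ I) → MonoidAlgebra ℤ D :=
  fun y => MonoidAlgebra.ofCoeff (show (D →₀ ℤ) from Finsupp.mapDomain Quotient.out y.coeff)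

noncomputable def fMap {D : Type} [CommGroup D] [Fintype D] (I : Subgroup D) :
    MonoidAlgebra ℤ D × MonoidAlgebra ℤ (D ⧸ I) → MonoidAlgebra ℤ D :=
  fun p => p.1 + nuElt ℤ I * liftSec I p.2

/-! `g = 1 - φ⁻¹ + #I` is a non-zero-divisor of `ℤ[D/I]`: if `g y = 0` then `φ⁻¹ y = (1 + #I) y`,
so `y = (1 + #I)ⁿ y` for `n` the order of `φ`, and `ℤ[D/I]` is torsion-free. As `ν_I` reduces to
`#I` modulo `I`, the reduction of `f(x, y)` is `g y`; this gives injectivity. Conversely any `z`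
with `z̄ = g y` equals `f(z - ν_I ỹ, y)`, the augmentation condition on `z - ν_I ỹ` being
automatic since `1 - φ⁻¹ ∈ Δ(D/I)`. So `f(W)` is the preimage of `(g)` in `ℤ[D]`, and the cokernel
is `ℤ[D/I]/(g)`. -/

namespace MonoidAlgebra

instance {R G : Type*} [Semiring R] [IsAddTorsionFree R] : IsAddTorsionFree (MonoidAlgebra R G) :=
  Function.Injective.isAddTorsionFree (coeffAddEquiv (R := R) (M := G)).toAddMonoidHom
    (coeffAddEquiv (R := R) (M := G)).injective

lemma isLeftRegular_one_sub_of_add_natCast {G : Type*} [CommMonoid G] {q : G}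
    (hq : IsOfFinOrder q) {m : ℕ} (hm : m ≠ 0) :
    IsLeftRegular (1 - of ℤ G q + m : MonoidAlgebra ℤ G) := by
  rw [isLeftRegular_iff_right_eq_zero_of_mul]
  intro y hy
  have hqy : of ℤ G q * y = (1 + m) • y := by
    rw [nsmul_eq_mul]; push_cast; linear_combination -hy
  have hpow : ∀ n : ℕ, of ℤ G q ^ n * y = (1 + m) ^ n • y := by
    intro n
    induction n with
    | zero => simp
    | succ n ih => rw [pow_succ, mul_assoc, hqy, mul_smul_comm, ih, smul_smul, pow_succ']
  have hN : 1 < (1 + m) ^ orderOf q := Nat.one_lt_pow hq.orderOf_pos.ne' (by omega)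
  have hfix : ((1 + m) ^ orderOf q - 1 + 1) • y = 0 + y := by
    rw [Nat.sub_add_cancel hN.le, ← hpow, ← map_pow, pow_orderOf_eq_one, map_one, one_mul,
      zero_add]
  rw [succ_nsmul, add_left_inj] at hfix
  exact (smul_eq_zero.mp hfix).resolve_left (by omega)

end MonoidAlgebra

namespace RingHom

variable {R S : Type*} [CommRing R] [CommRing S] (π : R →+* S)

noncomputable def quotientComapLinearEquiv (hπ : Function.Surjective π) (J : Ideal S) :
    letI := Module.compHom (S ⧸ J) π
    (R ⧸ J.comap π) ≃ₗ[R] (S ⧸ J) :=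
  letI := Module.compHom (S ⧸ J) π
  let θ : R →ₗ[R] S ⧸ J :=
    { toFun := fun r => Ideal.Quotient.mk J (π r)
      map_add' := by simp
      map_smul' := fun r s => by
        simp only [smul_eq_mul, map_mul, RingHom.id_apply]
        rfl }
  have hker : J.comap π = LinearMap.ker θ := by
    ext r; simp [θ, Ideal.Quotient.eq_zero_iff_mem]
  (Submodule.quotEquivOfEq _ _ hker).trans
    (θ.quotKerEquivOfSurjective (Ideal.Quotient.mk_surjective.comp hπ))

end RingHom

section GroupRing

variable {D : Type} [CommGroup D] (I : Subgroup D)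

lemma toQuot_of (d : D) : toQuot I (of ℤ D d) = of ℤ (D ⧸ I) d := by
  simp [toQuot, MonoidAlgebra.mapDomainRingHom]

lemma liftSec_eq_mapDomain (y : MonoidAlgebra ℤ (D ⧸ I)) :
    liftSec I y = mapDomain Quotient.out y := rfl

lemma toQuot_liftSec (y : MonoidAlgebra ℤ (D ⧸ I)) : toQuot I (liftSec I y) = y := by
  induction y using MonoidAlgebra.induction_linear with
  | zero => rw [liftSec_eq_mapDomain, mapDomain_zero, map_zero]
  | add a b ha hb =>
    rw [liftSec_eq_mapDomain, mapDomain_add, ← liftSec_eq_mapDomain, ← liftSec_eq_mapDomain,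
      map_add, ha, hb]
  | single q c => simp [liftSec_eq_mapDomain, toQuot, mapDomainRingHom]

lemma toQuot_surjective : Function.Surjective (toQuot I) :=
  fun y => ⟨liftSec I y, toQuot_liftSec I y⟩

lemma augMap_of (d : D) : augMap D (of ℤ D d) = 1 := by
  simp [augMap]

lemma augMap_toQuot (z : MonoidAlgebra ℤ D) : augMap (D ⧸ I) (toQuot I z) = augMap D z := by
  induction z using MonoidAlgebra.induction_linear with
  | zero => simp
  | add a b ha hb => rw [map_add, map_add, ha, hb, map_add]
  | single d c => simp [toQuot, augMap, mapDomainRingHom]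

lemma toQuot_nuElt [Fintype D] : toQuot I (nuElt ℤ I) = Nat.card I := by
  classical
  have h_one : ∀ σ ∈ Finset.univ.filter (· ∈ I), toQuot I (of ℤ D σ) = 1 := by
    intro σ hσ
    rw [toQuot_of, (QuotientGroup.eq_one_iff σ).mpr (Finset.mem_filter.mp hσ).2, map_one]
  rw [nuElt, map_sum, Finset.sum_congr rfl h_one]
  simp [Nat.card_eq_fintype_card, Fintype.card_subtype]

lemma augMap_eq_zero_of_toQuot_eq {x : MonoidAlgebra ℤ D} {q : D ⧸ I}
    {y : MonoidAlgebra ℤ (D ⧸ I)} (h : toQuot I x = (1 - of ℤ (D ⧸ I) q) * y) :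
    augMap D x = 0 := by
  rw [← augMap_toQuot, h, map_mul, map_sub, map_one, augMap_of, sub_self, zero_mul]

lemma mem_Wmod_iff {φq : D ⧸ I} {p : MonoidAlgebra ℤ D × MonoidAlgebra ℤ (D ⧸ I)} :
    p ∈ Wmod I φq ↔ toQuot I p.1 = (1 - of ℤ (D ⧸ I) φq⁻¹) * p.2 :=
  ⟨And.right, fun h => ⟨augMap_eq_zero_of_toQuot_eq I h, h⟩⟩

variable (φq : D ⧸ I)

noncomputable def gElt : MonoidAlgebra ℤ (D ⧸ I) :=
  1 - of ℤ (D ⧸ I) φq⁻¹ + (Nat.card I : MonoidAlgebra ℤ (D ⧸ I))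

variable [Fintype D]

lemma isLeftRegular_gElt : IsLeftRegular (gElt I φq) :=
  isLeftRegular_one_sub_of_add_natCast (isOfFinOrder_of_finite _) Nat.card_pos.ne'

lemma toQuot_fMap {p : MonoidAlgebra ℤ D × MonoidAlgebra ℤ (D ⧸ I)} (hp : p ∈ Wmod I φq) :
    toQuot I (fMap I p) = gElt I φq * p.2 := by
  rw [fMap, map_add, map_mul, toQuot_nuElt, toQuot_liftSec, (mem_Wmod_iff I).mp hp, gElt]
  ring

lemma fMap_injOn : Set.InjOn (fMap I) (Wmod I φq) := by
  rintro ⟨x, y⟩ hp ⟨x', y'⟩ hp' h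
  obtain rfl : y = y' := isLeftRegular_gElt I φq <| by
    simpa only [toQuot_fMap I φq hp, toQuot_fMap I φq hp'] using congrArg (toQuot I) h
  simpa [fMap] using h

lemma fMap_image_Wmod :
    fMap I '' Wmod I φq =
      ((Ideal.span {gElt I φq}).comap (toQuot I) : Set (MonoidAlgebra ℤ D)) := by
  ext z
  simp only [Set.mem_image, SetLike.mem_coe, Ideal.mem_comap, Ideal.mem_span_singleton']
  constructor
  · rintro ⟨p, hp, rfl⟩
    exact ⟨p.2, by rw [toQuot_fMap I φq hp, mul_comm]⟩
  · rintro ⟨y, hy⟩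
    refine ⟨(z - nuElt ℤ I * liftSec I y, y), (mem_Wmod_iff I).mpr ?_, sub_add_cancel _ _⟩
    rw [map_sub, map_mul, toQuot_nuElt, toQuot_liftSec, ← hy, gElt]
    ring

end GroupRing

theorem statement14_general {D : Type} [CommGroup D] [Fintype D] (I : Subgroup D)
    (φq : D ⧸ I) :
    letI : Module (MonoidAlgebra ℤ D)
        (MonoidAlgebra ℤ (D ⧸ I) ⧸
          Ideal.span {1 - MonoidAlgebra.of ℤ (D ⧸ I) φq⁻¹
            + (Nat.card I : MonoidAlgebra ℤ (D ⧸ I))}) :=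
      Module.compHom _ (toQuot I)
    Set.InjOn (fMap I) (Wmod I φq) ∧
    Nonempty ((MonoidAlgebra ℤ D ⧸
        Submodule.span (MonoidAlgebra ℤ D) (fMap I '' Wmod I φq))
      ≃ₗ[MonoidAlgebra ℤ D]
        (MonoidAlgebra ℤ (D ⧸ I) ⧸
          Ideal.span {1 - MonoidAlgebra.of ℤ (D ⧸ I) φq⁻¹
            + (Nat.card I : MonoidAlgebra ℤ (D ⧸ I))})) := by
  refine ⟨fMap_injOn I φq, ⟨?_⟩⟩
  rw [fMap_image_Wmod, Submodule.span_eq]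
  exact (toQuot I).quotientComapLinearEquiv (toQuot_surjective I) _

/-- for `I ⊆ D` with `D/I` cyclic with generator `φ`, the map
`f : W → ℤ[D]`, `f(x, y) = x + ν_I·ỹ`, is injective and its cokernel is isomorphic to
`ℤ[D/I]/(g)` as a `ℤ[D]`-module, where `g = 1 − φ⁻¹ + #I`. -/
theorem statement14 {D : Type} [CommGroup D] [Fintype D] (I : Subgroup D)
    (φq : D ⧸ I) (hgen : ∀ x : D ⧸ I, x ∈ Subgroup.zpowers φq) :
    letI : Module (MonoidAlgebra ℤ D)
        (MonoidAlgebra ℤ (D ⧸ I) ⧸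
          Ideal.span {1 - MonoidAlgebra.of ℤ (D ⧸ I) φq⁻¹
            + (Nat.card I : MonoidAlgebra ℤ (D ⧸ I))}) :=
      Module.compHom _ (toQuot I)
    Set.InjOn (fMap I) (Wmod I φq) ∧
    Nonempty ((MonoidAlgebra ℤ D ⧸
        Submodule.span (MonoidAlgebra ℤ D) (fMap I '' Wmod I φq))
      ≃ₗ[MonoidAlgebra ℤ D]
        (MonoidAlgebra ℤ (D ⧸ I) ⧸
          Ideal.span {1 - MonoidAlgebra.of ℤ (D ⧸ I) φq⁻¹
            + (Nat.card I : MonoidAlgebra ℤ (D ⧸ I))})) :=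
  statement14_general I φq
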